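/- Let G be a group and A a symmetrical partial kG-module algebra with A idempotent, or r(A)=0, or l(A)=0. Then for all g,h ∈ G and a ∈ A: (1) g·(h·(h⁻¹·a)) ∈ ψ_{gh}(A); (2) g·(h·a) = gh·(h⁻¹·(h·a)); (3) ψ_g ψ_h = ψ_h ψ_g; (4) g·(g⁻¹·(h·a)) = h·(h⁻¹g·(g⁻¹h·a)), where ψ_g(a) = g·(g⁻¹·a). -/

import Mathlib

section PartialGroupPrelude

variable (k : Type) [Field k] (G : Type) [Group G]
variable (A : Type) [NonUnitalRing A] [Module k A] [SMulCommClass k A A] [IsScalarTower k A A]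

/-- A symmetrical partial action of the group algebra `kG` on the (possibly nonunital)
algebra `A`, written out on the grouplike elements of `kG`:
`1 · a = a`, `g · (a (h · b)) = (g · a)(gh · b)` and `g · ((h · b) a) = (gh · b)(g · a)`. -/
structure SymmPartialGAction where
  act : G → A →ₗ[k] A
  one_act : ∀ a : A, act 1 a = a
  act_mul_right : ∀ (g h : G) (a b : A), act g (a * act h b) = act g a * act (g * h) b
  act_mul_left : ∀ (g h : G) (a b : A), act g (act h b * a) = act (g * h) b * act g a

/-- The algebra `A` is idempotent: `A² = A`. -/
def IsIdempotentAlgebra : Prop :=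
  ∀ a : A, a ∈ Submodule.span k {x : A | ∃ b c : A, x = b * c}

/-- `r(A) = 0`: the right annihilator of `A` is trivial. -/
def RAnnTrivial : Prop := ∀ a : A, (∀ b : A, b * a = 0) → a = 0

/-- `l(A) = 0`: the left annihilator of `A` is trivial. -/
def LAnnTrivial : Prop := ∀ b : A, (∀ a : A, b * a = 0) → b = 0

variable {k G A}

/-- `ψ_g(a) = g · (g⁻¹ · a)`. -/
def psiMap (P : SymmPartialGAction k G A) (g : G) : A →ₗ[k] A :=
  (P.act g).comp (P.act g⁻¹)

end PartialGroupPrelude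

/-! Each `ψ_g` lies in the centroid of `A`: `ψ_g(ab) = a ψ_g(b) = ψ_g(a) b`. Under any of the
three hypotheses a linear endomorphism of `A` is determined by its values on products, or by
its products with arbitrary elements on one side. Checking on such elements with the partial
action axioms gives that the centroid is commutative, hence (3), and the two identities
`h · ψ_g(a) = ψ_{hg}(h · a)` and `g · (h · a) = ψ_g(gh · a)`; (1), (2) and (4) are
reindexings of these. -/

section Centroid

variable {k : Type} [Field k] {G : Type} [Group G] {A : Type} [NonUnitalRing A] [Module k A]

theorem LinearMap.eq_of_eq_on_products
    (hA : IsIdempotentAlgebra k A ∨ RAnnTrivial A ∨ LAnnTrivial A) {F F' : A →ₗ[k] A}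
    (hprod : ∀ b c : A, F (b * c) = F' (b * c))
    (hleft : ∀ b a : A, b * F a = b * F' a)
    (hright : ∀ a b : A, F a * b = F' a * b) : F = F' := by
  rcases hA with hidem | hr | hl
  · refine LinearMap.ext_on (s := {x : A | ∃ b c : A, x = b * c}) ?_ ?_
    · exact eq_top_iff.mpr fun a _ => hidem a
    · rintro x ⟨b, c, rfl⟩
      exact hprod b c
  · ext a
    exact sub_eq_zero.mp <| hr _ fun b => by rw [mul_sub, hleft, sub_self]
  · ext a
    exact sub_eq_zero.mp <| hl _ fun b => by rw [sub_mul, hright, sub_self]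

theorem LinearMap.comp_comm_of_centroid
    (hA : IsIdempotentAlgebra k A ∨ RAnnTrivial A ∨ LAnnTrivial A) {S T : A →ₗ[k] A}
    (hS_left : ∀ a b : A, S (a * b) = a * S b) (hS_right : ∀ a b : A, S (a * b) = S a * b)
    (hT_left : ∀ a b : A, T (a * b) = a * T b) (hT_right : ∀ a b : A, T (a * b) = T a * b) :
    S ∘ₗ T = T ∘ₗ S := by
  have hprod : ∀ b c : A, S (T (b * c)) = T (S (b * c)) := fun b c => by
    rw [hT_right, hS_left, ← hT_right, ← hS_left]
  refine LinearMap.eq_of_eq_on_products hA hprod (fun b a => ?_) (fun a b => ?_)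
  · simp only [LinearMap.comp_apply]
    rw [← hS_left, ← hT_left, ← hT_left, ← hS_left, hprod]
  · simp only [LinearMap.comp_apply]
    rw [← hS_right, ← hT_right, ← hT_right, ← hS_right, hprod]

namespace SymmPartialGAction

variable (P : SymmPartialGAction k G A)

theorem act_mul (g : G) (a b : A) : P.act g (a * b) = P.act g a * P.act g b := by
  simpa only [P.one_act, mul_one] using P.act_mul_right g 1 a b

theorem act_act_inv_mul (g : G) (a b : A) : P.act g (P.act g⁻¹ b * a) = b * P.act g a := by
  simpa only [mul_inv_cancel, P.one_act] using P.act_mul_left g g⁻¹ a b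

theorem act_mul_act_inv (g : G) (a b : A) : P.act g (a * P.act g⁻¹ b) = P.act g a * b := by
  simpa only [mul_inv_cancel, P.one_act] using P.act_mul_right g g⁻¹ a b

theorem psiMap_apply (g : G) (a : A) : psiMap P g a = P.act g (P.act g⁻¹ a) := rfl

theorem psiMap_mul_left (g : G) (a b : A) : psiMap P g (a * b) = a * psiMap P g b := by
  rw [psiMap_apply, psiMap_apply, act_mul, act_act_inv_mul]

theorem psiMap_mul_right (g : G) (a b : A) : psiMap P g (a * b) = psiMap P g a * b := by
  rw [psiMap_apply, psiMap_apply, act_mul, act_mul_act_inv]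

theorem psiMap_comm (hA : IsIdempotentAlgebra k A ∨ RAnnTrivial A ∨ LAnnTrivial A) (g h : G) :
    psiMap P g ∘ₗ psiMap P h = psiMap P h ∘ₗ psiMap P g :=
  LinearMap.comp_comm_of_centroid hA (P.psiMap_mul_left g) (P.psiMap_mul_right g)
    (P.psiMap_mul_left h) (P.psiMap_mul_right h)

theorem act_psiMap (hA : IsIdempotentAlgebra k A ∨ RAnnTrivial A ∨ LAnnTrivial A)
    (h g : G) (a : A) : P.act h (psiMap P g a) = psiMap P (h * g) (P.act h a) := by
  have hprod : ∀ b c : A,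
      P.act h (psiMap P g (b * c)) = psiMap P (h * g) (P.act h (b * c)) := fun b c => by
    have hinv : (h * g)⁻¹ * h = g⁻¹ := by group
    rw [psiMap_mul_left, psiMap_apply, P.act_mul_right, act_mul, psiMap_apply,
      P.act_mul_right, hinv, act_act_inv_mul]
  -- both sides turn multiplication by `b` into multiplication of the argument by `h⁻¹ · b`
  refine congrArg (· a) (LinearMap.eq_of_eq_on_products (F := P.act h ∘ₗ psiMap P g)
    (F' := psiMap P (h * g) ∘ₗ P.act h) hA hprod (fun b a => ?_) (fun a b => ?_))
  · simp only [LinearMap.comp_apply]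
    rw [← act_act_inv_mul, ← psiMap_mul_left, hprod, act_act_inv_mul, psiMap_mul_left]
  · simp only [LinearMap.comp_apply]
    rw [← act_mul_act_inv, ← psiMap_mul_right, hprod, act_mul_act_inv, psiMap_mul_right]

theorem act_act (hA : IsIdempotentAlgebra k A ∨ RAnnTrivial A ∨ LAnnTrivial A)
    (g h : G) (a : A) : P.act g (P.act h a) = psiMap P g (P.act (g * h) a) := by
  have hleft : ∀ b a : A, b * P.act g (P.act h a) = b * psiMap P g (P.act (g * h) a) :=
    fun b a => by
      rw [← act_act_inv_mul, P.act_mul_right, ← psiMap_apply, ← psiMap_mul_right,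
        psiMap_mul_left]
  refine congrArg (· a) (LinearMap.eq_of_eq_on_products (F := P.act g ∘ₗ P.act h)
    (F' := psiMap P g ∘ₗ P.act (g * h)) hA (fun b c => ?_) hleft (fun a b => ?_))
  · simp only [LinearMap.comp_apply]
    rw [act_mul, P.act_mul_left, hleft, ← psiMap_mul_left, ← act_mul]
  · simp only [LinearMap.comp_apply]
    rw [← act_mul_act_inv, P.act_mul_left, ← psiMap_apply, ← psiMap_mul_left,
      psiMap_mul_right]

end SymmPartialGAction

end Centroid

section Stmt6

variable {k : Type} [Field k] {G : Type} [Group G]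
variable {A : Type} [NonUnitalRing A] [Module k A] [SMulCommClass k A A] [IsScalarTower k A A]

open SymmPartialGAction in
/-- Let `A` be a symmetrical partial `kG`-module algebra which is idempotent
or has `r(A) = 0` or `l(A) = 0`.  Then for all `g, h ∈ G`, `a ∈ A`:
(1) `g · (h · (h⁻¹ · a)) ∈ ψ_{gh}(A)`; (2) `g · (h · a) = gh · (h⁻¹ · (h · a))`;
(3) `ψ_g ψ_h = ψ_h ψ_g`; (4) `g · (g⁻¹ · (h · a)) = h · (h⁻¹g · (g⁻¹h · a))`. -/
theorem psi_lemma_nine (P : SymmPartialGAction k G A)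
    (hA : IsIdempotentAlgebra k A ∨ RAnnTrivial A ∨ LAnnTrivial A)
    (g h : G) (a : A) :
    P.act g (P.act h (P.act h⁻¹ a)) ∈ Set.range (psiMap P (g * h)) ∧
    P.act g (P.act h a) = P.act (g * h) (P.act h⁻¹ (P.act h a)) ∧
    (psiMap P g).comp (psiMap P h) = (psiMap P h).comp (psiMap P g) ∧
    P.act g (P.act g⁻¹ (P.act h a)) =
      P.act h (P.act (h⁻¹ * g) (P.act (g⁻¹ * h) a)) := by
  refine ⟨⟨P.act g a, (P.act_psiMap hA g h a).symm⟩, ?_, P.psiMap_comm hA g h, ?_⟩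
  · have hreindex := P.act_psiMap hA (g * h) h⁻¹ a
    rw [mul_inv_cancel_right, psiMap_apply, inv_inv] at hreindex
    rw [P.act_act hA, hreindex]
  · have hreindex := P.act_psiMap hA h (h⁻¹ * g) a
    rw [mul_inv_cancel_left, psiMap_apply, mul_inv_rev, inv_inv] at hreindex
    rw [← psiMap_apply, hreindex]

end Stmt6
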